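/- arXiv:2307.07131 — 5 statements merged into one kernel-verified Lean document; each statement's English description precedes it below -/
import Mathlib

section
/- Let P₁ be a Markov kernel from Ω₁ to Ω₁' and P₂ a Markov kernel from Ω₂ to Ω₂', with stationary input distributions μ₁ and μ₂ respectively. Suppose Pᵢ satisfies (1-κᵢ)-contraction in KL-divergence with respect to μᵢ for i = 1,2. For p ∈ [0,1], define P = p(P₁⊗I₂) + (1-p)(I₁⊗P₂) as a Markov kernel from Ω₁×Ω₂ to the disjoint union (Ω₁'×Ω₂) ⊔ (Ω₁×Ω₂'). Then P satisfies (1-κ)-contraction in KL-divergence with respect to μ₁⊗μ₂, where κ = min{(1-p)κ₂, pκ₁}. -/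
open Finset

/-- KL-divergence between two mass functions on a finite set. -/
noncomputable def klDiv {Ω : Type*} [Fintype Ω] (ν μ : Ω → ℝ) : ℝ :=
  ∑ x, ν x * Real.log (ν x / μ x)

/-- Pushforward of a mass function along a kernel. -/
noncomputable def push {Ω₁ Ω₂ : Type*} [Fintype Ω₁] (μ : Ω₁ → ℝ) (P : Ω₁ → Ω₂ → ℝ) :
    Ω₂ → ℝ := fun y => ∑ x, μ x * P x y

/-- A kernel `K` satisfies `ρ`-contraction in KL-divergence with respect to `μ`. -/
def KLContraction {Ω₁ Ω₂ : Type*} [Fintype Ω₁] [Fintype Ω₂]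
    (K : Ω₁ → Ω₂ → ℝ) (μ : Ω₁ → ℝ) (ρ : ℝ) : Prop :=
  ∀ ν : Ω₁ → ℝ, (∀ x, 0 ≤ ν x) → (∑ x, ν x = 1) → (∀ x, μ x = 0 → ν x = 0) →
    klDiv (push ν K) (push μ K) ≤ ρ * klDiv ν μ

noncomputable def klt (a b : ℝ) : ℝ := a * Real.log (a / b)

lemma klt_zero (b : ℝ) : klt 0 b = 0 := by simp [klt]

lemma klt_scale {c : ℝ} (hc : 0 ≤ c) (a b : ℝ) : klt (c * a) (c * b) = c * klt a b := by
  rcases eq_or_lt_of_le hc with h | h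
  · simp [klt, ← h]
  · unfold klt
    rw [mul_div_mul_left _ _ h.ne']
    ring

lemma klDiv_eq {Ω : Type*} [Fintype Ω] (ν μ : Ω → ℝ) :
    klDiv ν μ = ∑ x, klt (ν x) (μ x) := rfl

/-- The log-sum inequality. -/
lemma logsum {ι : Type*} (s : Finset ι) (a b : ι → ℝ)
    (ha : ∀ i ∈ s, 0 ≤ a i) (hb : ∀ i ∈ s, 0 ≤ b i)
    (hab : ∀ i ∈ s, b i = 0 → a i = 0) :
    klt (∑ i ∈ s, a i) (∑ i ∈ s, b i) ≤ ∑ i ∈ s, klt (a i) (b i) := by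
  set S := ∑ i ∈ s, a i with hS
  set T := ∑ i ∈ s, b i with hT
  by_cases hS0 : S = 0
  · have hz : ∀ i ∈ s, a i = 0 := (Finset.sum_eq_zero_iff_of_nonneg ha).1 hS0
    have : ∑ i ∈ s, klt (a i) (b i) = 0 := Finset.sum_eq_zero fun i hi => by
      rw [hz i hi]; exact klt_zero _
    rw [hS0, this, klt_zero]
  · have hSpos : 0 < S := lt_of_le_of_ne (Finset.sum_nonneg ha) (Ne.symm hS0)
    have hTpos : 0 < T := by
      rcases lt_or_eq_of_le (Finset.sum_nonneg hb) with h | h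
      · exact h
      · exfalso
        apply hS0
        apply Finset.sum_eq_zero
        intro i hi
        exact hab i hi ((Finset.sum_eq_zero_iff_of_nonneg hb).1 h.symm i hi)
    have key : ∀ i ∈ s, a i - b i * (S / T) ≤ klt (a i) (b i) - a i * Real.log (S / T) := by
      intro i hi
      rcases eq_or_lt_of_le (ha i hi) with h0 | h0
      · rw [← h0, klt_zero]
        have : 0 ≤ b i * (S / T) := mul_nonneg (hb i hi) (div_nonneg hSpos.le hTpos.le)
        linarith
      · have hbpos : 0 < b i := by
          rcases eq_or_lt_of_le (hb i hi) with h1 | h1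
          · exact absurd (hab i hi h1.symm) (ne_of_gt h0)
          · exact h1
        set x : ℝ := (a i / b i) / (S / T) with hx
        have hxpos : 0 < x := div_pos (div_pos h0 hbpos) (div_pos hSpos hTpos)
        have hlog : 1 - x⁻¹ ≤ Real.log x := by
          have := Real.log_le_sub_one_of_pos (inv_pos.2 hxpos)
          rw [Real.log_inv] at this
          linarith
        have hxinv : a i * x⁻¹ = b i * (S / T) := by
          rw [hx]
          field_simp
        have hlogx : Real.log x = Real.log (a i / b i) - Real.log (S / T) := by
          rw [hx, Real.log_div (div_pos h0 hbpos).ne' (div_pos hSpos hTpos).ne']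
        have := mul_le_mul_of_nonneg_left hlog h0.le
        rw [hlogx, mul_sub, mul_sub, mul_one, hxinv] at this
        unfold klt
        linarith
    have hsum := Finset.sum_le_sum key
    rw [Finset.sum_sub_distrib, Finset.sum_sub_distrib, ← Finset.sum_mul, ← Finset.sum_mul,
      ← hS, ← hT] at hsum
    have hTS : T * (S / T) = S := by field_simp
    rw [hTS] at hsum
    unfold klt at hsum ⊢
    linarith

lemma klDiv_nonneg' {Ω : Type*} [Fintype Ω] (ν μ : Ω → ℝ)
    (hν : ∀ x, 0 ≤ ν x) (hν1 : ∑ x, ν x = 1)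
    (hμnn : ∀ x, 0 ≤ μ x) (hμ1 : ∑ x, μ x = 1)
    (habs : ∀ x, μ x = 0 → ν x = 0) : 0 ≤ klDiv ν μ := by
  have := logsum Finset.univ ν μ (fun i _ => hν i) (fun i _ => hμnn i) (fun i _ => habs i)
  rw [hν1, hμ1] at this
  simpa [klt, klDiv_eq] using this

/-- Chain rule for KL divergence on a product space. -/
lemma chain {Ω₁ Ω₂ : Type*} [Fintype Ω₁] [Fintype Ω₂]
    (ν : Ω₁ × Ω₂ → ℝ) (m₁ : Ω₁ → ℝ) (m₂ : Ω₂ → ℝ)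
    (hν : ∀ z, 0 ≤ ν z) (habs : ∀ z, m₁ z.1 * m₂ z.2 = 0 → ν z = 0) :
    klDiv ν (fun z => m₁ z.1 * m₂ z.2) =
      klDiv (fun x₂ => ∑ x₁, ν (x₁, x₂)) m₂ +
      ∑ x₂, ∑ x₁, klt (ν (x₁, x₂)) ((∑ x₁', ν (x₁', x₂)) * m₁ x₁) := by
  rw [klDiv_eq, klDiv_eq, Fintype.sum_prod_type_right, ← Finset.sum_add_distrib]
  apply Finset.sum_congr rfl
  intro x₂ _
  have hpt : ∀ x₁, klt (ν (x₁, x₂)) (m₁ x₁ * m₂ x₂) =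
      ν (x₁, x₂) * Real.log ((∑ x₁', ν (x₁', x₂)) / m₂ x₂) +
      klt (ν (x₁, x₂)) ((∑ x₁', ν (x₁', x₂)) * m₁ x₁) := by
    intro x₁
    rcases eq_or_lt_of_le (hν (x₁, x₂)) with h0 | h0
    · simp [klt, ← h0]
    · have hν₂ : 0 < ∑ x₁', ν (x₁', x₂) := by
        calc (0:ℝ) < ν (x₁, x₂) := h0
        _ ≤ ∑ x₁', ν (x₁', x₂) :=
          Finset.single_le_sum (fun i _ => hν (i, x₂)) (Finset.mem_univ x₁)
      have hm : m₁ x₁ * m₂ x₂ ≠ 0 := fun h => (ne_of_gt h0) (habs (x₁, x₂) h)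
      have hm₁ : m₁ x₁ ≠ 0 := fun h => hm (by rw [h, zero_mul])
      have hm₂ : m₂ x₂ ≠ 0 := fun h => hm (by rw [h, mul_zero])
      have hsplit : ν (x₁, x₂) / (m₁ x₁ * m₂ x₂) =
          ((∑ x₁', ν (x₁', x₂)) / m₂ x₂) * (ν (x₁, x₂) / ((∑ x₁', ν (x₁', x₂)) * m₁ x₁)) := by
        field_simp
      unfold klt
      rw [hsplit, Real.log_mul (div_ne_zero hν₂.ne' hm₂)
        (div_ne_zero h0.ne' (mul_ne_zero hν₂.ne' hm₁)), mul_add]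
  rw [Finset.sum_congr rfl (fun x₁ _ => hpt x₁), Finset.sum_add_distrib, ← Finset.sum_mul]
  rfl

/-- One-coordinate contraction bound. -/
lemma half {Ω₁ Ω₂ Ω₁' : Type*} [Fintype Ω₁] [Fintype Ω₂] [Fintype Ω₁']
    (μ₁ : Ω₁ → ℝ) (hμ₁nn : ∀ x, 0 ≤ μ₁ x) (μ₂ : Ω₂ → ℝ)
    (P₁ : Ω₁ → Ω₁' → ℝ) (hP₁nn : ∀ x y, 0 ≤ P₁ x y) (hP₁row : ∀ x, ∑ y, P₁ x y = 1)
    (κ₁ : ℝ) (h₁ : KLContraction P₁ μ₁ (1 - κ₁))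
    (ν : Ω₁ × Ω₂ → ℝ) (hνnn : ∀ z, 0 ≤ ν z)
    (habs : ∀ z : Ω₁ × Ω₂, μ₁ z.1 * μ₂ z.2 = 0 → ν z = 0) :
    klDiv (fun y : Ω₁' × Ω₂ => ∑ x₁, ν (x₁, y.2) * P₁ x₁ y.1)
        (fun y : Ω₁' × Ω₂ => push μ₁ P₁ y.1 * μ₂ y.2) ≤
      klDiv (fun x₂ => ∑ x₁, ν (x₁, x₂)) μ₂ +
      (1 - κ₁) * (klDiv ν (fun z => μ₁ z.1 * μ₂ z.2) -
        klDiv (fun x₂ => ∑ x₁, ν (x₁, x₂)) μ₂) := by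
  set A : Ω₁' × Ω₂ → ℝ := fun y => ∑ x₁, ν (x₁, y.2) * P₁ x₁ y.1 with hA
  have hAnn : ∀ z, 0 ≤ A z := fun z =>
    Finset.sum_nonneg fun i _ => mul_nonneg (hνnn _) (hP₁nn _ _)
  have hAmarg : ∀ x₂, (∑ y₁, A (y₁, x₂)) = ∑ x₁, ν (x₁, x₂) := by
    intro x₂
    rw [hA]
    rw [Finset.sum_comm]
    simp [← Finset.mul_sum, hP₁row]
  have hAabs : ∀ y : Ω₁' × Ω₂, push μ₁ P₁ y.1 * μ₂ y.2 = 0 → A y = 0 := by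
    intro y hy
    rcases mul_eq_zero.1 hy with h | h
    · have hall := (Finset.sum_eq_zero_iff_of_nonneg
        (fun i (_ : i ∈ Finset.univ) => mul_nonneg (hμ₁nn i) (hP₁nn i y.1))).1 h
      apply Finset.sum_eq_zero
      intro x₁ _
      rcases mul_eq_zero.1 (hall x₁ (Finset.mem_univ x₁)) with h1 | h1
      · rw [habs (x₁, y.2) (by rw [h1, zero_mul]), zero_mul]
      · rw [h1, mul_zero]
    · apply Finset.sum_eq_zero
      intro x₁ _
      rw [habs (x₁, y.2) (by rw [h, mul_zero]), zero_mul]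
  have hchainA := chain A (push μ₁ P₁) μ₂ hAnn hAabs
  simp only [hAmarg] at hchainA
  have hchainν := chain ν μ₁ μ₂ hνnn habs
  have hbound : ∀ x₂, (∑ y₁, klt (A (y₁, x₂)) ((∑ x₁, ν (x₁, x₂)) * push μ₁ P₁ y₁)) ≤
      (1 - κ₁) * ∑ x₁, klt (ν (x₁, x₂)) ((∑ x₁', ν (x₁', x₂)) * μ₁ x₁) := by
    intro x₂
    rcases eq_or_lt_of_le (Finset.sum_nonneg fun i (_ : i ∈ Finset.univ) => hνnn (i, x₂))
      with h0 | h0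
    · have hz : ∀ x₁, ν (x₁, x₂) = 0 := fun x₁ =>
        (Finset.sum_eq_zero_iff_of_nonneg (fun i _ => hνnn (i, x₂))).1 h0.symm x₁
          (Finset.mem_univ _)
      have hAz : ∀ y₁, A (y₁, x₂) = 0 := fun y₁ =>
        Finset.sum_eq_zero fun x₁ _ => by rw [hz, zero_mul]
      simp [hAz, hz, klt_zero]
    · set c := ∑ x₁, ν (x₁, x₂) with hc
      set t : Ω₁ → ℝ := fun x₁ => ν (x₁, x₂) / c with ht
      have htnn : ∀ x₁, 0 ≤ t x₁ := fun x₁ => div_nonneg (hνnn _) h0.le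
      have ht1 : ∑ x₁, t x₁ = 1 := by
        rw [ht, ← Finset.sum_div]
        exact div_self h0.ne'
      have htabs : ∀ x₁, μ₁ x₁ = 0 → t x₁ = 0 := by
        intro x₁ h
        rw [ht]
        simp [habs (x₁, x₂) (by rw [h, zero_mul])]
      have hcontr := h₁ t htnn ht1 htabs
      have hνrw : ∀ x₁, ν (x₁, x₂) = c * t x₁ := by
        intro x₁
        rw [ht]
        field_simp
      have hArw : ∀ y₁, A (y₁, x₂) = c * push t P₁ y₁ := by
        intro y₁
        rw [hA, push, Finset.mul_sum]
        apply Finset.sum_congr rfl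
        intro x₁ _
        rw [← mul_assoc, ← hνrw x₁]
      calc ∑ y₁, klt (A (y₁, x₂)) (c * push μ₁ P₁ y₁)
          = ∑ y₁, c * klt (push t P₁ y₁) (push μ₁ P₁ y₁) := by
            apply Finset.sum_congr rfl
            intro y₁ _
            rw [hArw, klt_scale h0.le]
        _ = c * klDiv (push t P₁) (push μ₁ P₁) := by rw [← Finset.mul_sum, klDiv_eq]
        _ ≤ c * ((1 - κ₁) * klDiv t μ₁) := mul_le_mul_of_nonneg_left hcontr h0.le
        _ = (1 - κ₁) * ∑ x₁, klt (ν (x₁, x₂)) (c * μ₁ x₁) := by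
            have : ∑ x₁, klt (ν (x₁, x₂)) (c * μ₁ x₁) = c * klDiv t μ₁ := by
              rw [klDiv_eq, Finset.mul_sum]
              apply Finset.sum_congr rfl
              intro x₁ _
              rw [hνrw x₁, klt_scale h0.le]
            rw [this]
            ring
  have hsum : ∑ x₂, ∑ y₁, klt (A (y₁, x₂)) ((∑ x₁, ν (x₁, x₂)) * push μ₁ P₁ y₁) ≤
      (1 - κ₁) * ∑ x₂, ∑ x₁, klt (ν (x₁, x₂)) ((∑ x₁', ν (x₁', x₂)) * μ₁ x₁) := by
    rw [Finset.mul_sum]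
    exact Finset.sum_le_sum fun x₂ _ => hbound x₂
  have hD : ∑ x₂, ∑ x₁, klt (ν (x₁, x₂)) ((∑ x₁', ν (x₁', x₂)) * μ₁ x₁) =
      klDiv ν (fun z => μ₁ z.1 * μ₂ z.2) - klDiv (fun x₂ => ∑ x₁, ν (x₁, x₂)) μ₂ := by
    linarith [hchainν]
  rw [hD] at hsum
  linarith [hchainA, hsum]

/-- Tensorization of entropy contraction. If `Pᵢ` satisfies `(1-κᵢ)`-contraction
in KL-divergence with respect to `μᵢ`, then
`P = p (P₁ ⊗ I₂) + (1-p) (I₁ ⊗ P₂)`, a kernel from `Ω₁ × Ω₂` to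
`(Ω₁' × Ω₂) ⊕ (Ω₁ × Ω₂')`, satisfies `(1-κ)`-contraction in KL-divergence with respect to
`μ₁ ⊗ μ₂`, where `κ = min {(1-p) κ₂, p κ₁}`. -/
theorem kl_contraction_tensorization
    {Ω₁ Ω₂ Ω₁' Ω₂' : Type*} [Fintype Ω₁] [Fintype Ω₂] [Fintype Ω₁'] [Fintype Ω₂']
    [DecidableEq Ω₁] [DecidableEq Ω₂]
    (μ₁ : Ω₁ → ℝ) (hμ₁nn : ∀ x, 0 ≤ μ₁ x) (hμ₁1 : ∑ x, μ₁ x = 1)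
    (μ₂ : Ω₂ → ℝ) (hμ₂nn : ∀ x, 0 ≤ μ₂ x) (hμ₂1 : ∑ x, μ₂ x = 1)
    (P₁ : Ω₁ → Ω₁' → ℝ) (hP₁nn : ∀ x y, 0 ≤ P₁ x y) (hP₁row : ∀ x, ∑ y, P₁ x y = 1)
    (P₂ : Ω₂ → Ω₂' → ℝ) (hP₂nn : ∀ x y, 0 ≤ P₂ x y) (hP₂row : ∀ x, ∑ y, P₂ x y = 1)
    (κ₁ κ₂ : ℝ) (hκ₁ : 0 ≤ κ₁) (hκ₂ : 0 ≤ κ₂)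
    (h₁ : KLContraction P₁ μ₁ (1 - κ₁)) (h₂ : KLContraction P₂ μ₂ (1 - κ₂))
    (p : ℝ) (hp0 : 0 ≤ p) (hp1 : p ≤ 1)
    (P : Ω₁ × Ω₂ → (Ω₁' × Ω₂) ⊕ (Ω₁ × Ω₂') → ℝ)
    (hP : ∀ x₁ x₂, (∀ y₁ y₂, P (x₁, x₂) (Sum.inl (y₁, y₂)) =
            p * P₁ x₁ y₁ * (if y₂ = x₂ then 1 else 0)) ∧
          (∀ y₁ y₂, P (x₁, x₂) (Sum.inr (y₁, y₂)) =
            (1 - p) * (if y₁ = x₁ then 1 else 0) * P₂ x₂ y₂)) :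
    KLContraction P (fun z : Ω₁ × Ω₂ => μ₁ z.1 * μ₂ z.2)
      (1 - min ((1 - p) * κ₂) (p * κ₁)) := by
  intro ν hνnn hν1 hνabs
  have h1p : (0:ℝ) ≤ 1 - p := by linarith
  -- abbreviations (as plain terms, no `set` to keep lemma application syntactic)
  -- push computations
  have hpushl : ∀ (ρ : Ω₁ × Ω₂ → ℝ) (y : Ω₁' × Ω₂),
      push ρ P (Sum.inl y) = p * ∑ x₁, ρ (x₁, y.2) * P₁ x₁ y.1 := by
    intro ρ y
    obtain ⟨y₁, y₂⟩ := y
    rw [push, Fintype.sum_prod_type]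
    have hterm : ∀ x₁ x₂, ρ (x₁, x₂) * P (x₁, x₂) (Sum.inl (y₁, y₂)) =
        if y₂ = x₂ then ρ (x₁, x₂) * (p * P₁ x₁ y₁) else 0 := by
      intro x₁ x₂
      rw [(hP x₁ x₂).1 y₁ y₂]
      by_cases h : y₂ = x₂ <;> simp [h]
    simp only [hterm, Finset.sum_ite_eq, Finset.mem_univ, if_true]
    rw [Finset.mul_sum]
    apply Finset.sum_congr rfl
    intro x₁ _
    ring
  have hpushr : ∀ (ρ : Ω₁ × Ω₂ → ℝ) (y : Ω₁ × Ω₂'),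
      push ρ P (Sum.inr y) = (1 - p) * ∑ x₂, ρ (y.1, x₂) * P₂ x₂ y.2 := by
    intro ρ y
    obtain ⟨y₁, y₂⟩ := y
    rw [push, Fintype.sum_prod_type_right]
    have hterm : ∀ x₂ x₁, ρ (x₁, x₂) * P (x₁, x₂) (Sum.inr (y₁, y₂)) =
        if y₁ = x₁ then ρ (x₁, x₂) * ((1 - p) * P₂ x₂ y₂) else 0 := by
      intro x₂ x₁
      rw [(hP x₁ x₂).2 y₁ y₂]
      by_cases h : y₁ = x₁ <;> simp [h]
    simp only [hterm, Finset.sum_ite_eq, Finset.mem_univ, if_true]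
    rw [Finset.mul_sum]
    apply Finset.sum_congr rfl
    intro x₂ _
    ring
  -- the pushforward of μ on each component
  have hμpushl : ∀ y : Ω₁' × Ω₂,
      (∑ x₁, (fun z : Ω₁ × Ω₂ => μ₁ z.1 * μ₂ z.2) (x₁, y.2) * P₁ x₁ y.1) =
      push μ₁ P₁ y.1 * μ₂ y.2 := by
    intro y
    rw [push, Finset.sum_mul]
    apply Finset.sum_congr rfl
    intro x₁ _
    ring
  have hμpushr : ∀ y : Ω₁ × Ω₂',
      (∑ x₂, (fun z : Ω₁ × Ω₂ => μ₁ z.1 * μ₂ z.2) (y.1, x₂) * P₂ x₂ y.2) =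
      μ₁ y.1 * push μ₂ P₂ y.2 := by
    intro y
    rw [push, Finset.mul_sum]
    apply Finset.sum_congr rfl
    intro x₂ _
    ring
  -- split klDiv over the sum type
  have hsplit : klDiv (push ν P) (push (fun z : Ω₁ × Ω₂ => μ₁ z.1 * μ₂ z.2) P) =
      p * klDiv (fun y : Ω₁' × Ω₂ => ∑ x₁, ν (x₁, y.2) * P₁ x₁ y.1)
          (fun y : Ω₁' × Ω₂ => push μ₁ P₁ y.1 * μ₂ y.2) +
      (1 - p) * klDiv (fun y : Ω₁ × Ω₂' => ∑ x₂, ν (y.1, x₂) * P₂ x₂ y.2)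
          (fun y : Ω₁ × Ω₂' => μ₁ y.1 * push μ₂ P₂ y.2) := by
    rw [klDiv_eq, Fintype.sum_sum_type, klDiv_eq, klDiv_eq, Finset.mul_sum, Finset.mul_sum]
    congr 1
    · apply Finset.sum_congr rfl
      intro y _
      rw [hpushl ν y, hpushl (fun z => μ₁ z.1 * μ₂ z.2) y, hμpushl y, klt_scale hp0]
    · apply Finset.sum_congr rfl
      intro y _
      rw [hpushr ν y, hpushr (fun z => μ₁ z.1 * μ₂ z.2) y, hμpushr y, klt_scale h1p]
  -- first half bound
  have hAbound := half μ₁ hμ₁nn μ₂ P₁ hP₁nn hP₁row κ₁ h₁ ν hνnn hνabs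
  -- second half bound, via swapping
  have hCsw := half μ₂ hμ₂nn μ₁ P₂ hP₂nn hP₂row κ₂ h₂ (fun z : Ω₂ × Ω₁ => ν (z.2, z.1))
    (fun z => hνnn _) (fun z hz => hνabs (z.2, z.1) (by
      simp only
      rw [mul_comm]
      exact hz))
  -- transport the swapped statement
  have swKL : klDiv (fun z : Ω₂ × Ω₁ => ν (z.2, z.1)) (fun z : Ω₂ × Ω₁ => μ₂ z.1 * μ₁ z.2) =
      klDiv ν (fun z : Ω₁ × Ω₂ => μ₁ z.1 * μ₂ z.2) := by
    rw [klDiv_eq, klDiv_eq]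
    exact Fintype.sum_equiv (Equiv.prodComm Ω₂ Ω₁) _ _ (fun z => by
      simp [Equiv.prodComm, Prod.swap, mul_comm])
  have swC : klDiv (fun y : Ω₂' × Ω₁ => ∑ x₂, ν (y.2, x₂) * P₂ x₂ y.1)
      (fun y : Ω₂' × Ω₁ => push μ₂ P₂ y.1 * μ₁ y.2) =
      klDiv (fun y : Ω₁ × Ω₂' => ∑ x₂, ν (y.1, x₂) * P₂ x₂ y.2)
        (fun y : Ω₁ × Ω₂' => μ₁ y.1 * push μ₂ P₂ y.2) := by
    rw [klDiv_eq, klDiv_eq]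
    exact Fintype.sum_equiv (Equiv.prodComm Ω₂' Ω₁) _ _ (fun z => by
      simp [Equiv.prodComm, Prod.swap, mul_comm])
  rw [swKL, swC] at hCsw
  -- marginals
  have hν₂1 : ∑ x₂, ∑ x₁, ν (x₁, x₂) = 1 := by
    rw [← hν1, Fintype.sum_prod_type_right]
  have hν₁1 : ∑ x₁, ∑ x₂, ν (x₁, x₂) = 1 := by
    rw [← hν1, Fintype.sum_prod_type]
  have hν₂abs : ∀ x₂, μ₂ x₂ = 0 → ∑ x₁, ν (x₁, x₂) = 0 := by
    intro x₂ h
    exact Finset.sum_eq_zero fun x₁ _ => hνabs (x₁, x₂) (by simp [h])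
  have hν₁abs : ∀ x₁, μ₁ x₁ = 0 → ∑ x₂, ν (x₁, x₂) = 0 := by
    intro x₁ h
    exact Finset.sum_eq_zero fun x₂ _ => hνabs (x₁, x₂) (by simp [h])
  have hK₂ : 0 ≤ klDiv (fun x₂ => ∑ x₁, ν (x₁, x₂)) μ₂ :=
    klDiv_nonneg' _ _ (fun x₂ => Finset.sum_nonneg fun i _ => hνnn _) hν₂1 hμ₂nn hμ₂1 hν₂abs
  have hK₁ : 0 ≤ klDiv (fun x₁ => ∑ x₂, ν (x₁, x₂)) μ₁ :=
    klDiv_nonneg' _ _ (fun x₁ => Finset.sum_nonneg fun i _ => hνnn _) hν₁1 hμ₁nn hμ₁1 hν₁abs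
  -- superadditivity
  have hsup : klDiv (fun x₁ => ∑ x₂, ν (x₁, x₂)) μ₁ + klDiv (fun x₂ => ∑ x₁, ν (x₁, x₂)) μ₂ ≤
      klDiv ν (fun z : Ω₁ × Ω₂ => μ₁ z.1 * μ₂ z.2) := by
    have hch := chain ν μ₁ μ₂ hνnn hνabs
    have hD : klDiv (fun x₁ => ∑ x₂, ν (x₁, x₂)) μ₁ ≤
        ∑ x₂, ∑ x₁, klt (ν (x₁, x₂)) ((∑ x₁', ν (x₁', x₂)) * μ₁ x₁) := by
      rw [Finset.sum_comm, klDiv_eq]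
      apply Finset.sum_le_sum
      intro x₁ _
      have hls := logsum Finset.univ (fun x₂ => ν (x₁, x₂))
        (fun x₂ => (∑ x₁', ν (x₁', x₂)) * μ₁ x₁)
        (fun i _ => hνnn _)
        (fun i _ => mul_nonneg (Finset.sum_nonneg fun j _ => hνnn _) (hμ₁nn _))
        (by
          intro i _ h
          rcases mul_eq_zero.1 h with h | h
          · exact (Finset.sum_eq_zero_iff_of_nonneg (fun j _ => hνnn _)).1 h x₁
              (Finset.mem_univ _)
          · exact hνabs (x₁, i) (by simp [h]))
      rw [← Finset.sum_mul, hν₂1, one_mul] at hls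
      exact hls
    linarith [hch, hD]
  -- final arithmetic
  rw [hsplit]
  rcases le_total (p * κ₁) ((1 - p) * κ₂) with hm | hm
  · rw [min_eq_right hm]
    nlinarith [mul_le_mul_of_nonneg_left hAbound hp0,
      mul_le_mul_of_nonneg_left hCsw h1p,
      mul_nonneg (sub_nonneg.2 hm) hK₂,
      mul_nonneg (mul_nonneg h1p hκ₂) (sub_nonneg.2 hsup)]
  · rw [min_eq_left hm]
    nlinarith [mul_le_mul_of_nonneg_left hAbound hp0,
      mul_le_mul_of_nonneg_left hCsw h1p,
      mul_nonneg (sub_nonneg.2 hm) hK₁,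
      mul_nonneg (mul_nonneg hp0 hκ₁) (sub_nonneg.2 hsup)]
end

section
/- Let P be a Markov kernel from finite set Ω₁ to finite set Ω₂, with μ₁ a distribution on Ω₁ and μ₂ = μ₁P. Let π₁ : Ω₁ → Ω₁' and π₂ : Ω₂ → Ω₂' be maps, and let μᵢ' = μᵢ ∘ πᵢ⁻¹. Define the projected kernel P'(x₁', x₂') = Σ_{π₁(x₁)=x₁'} Σ_{π₂(x₂)=x₂'} μ₁(x₁ | π₁(x₁)=x₁') P(x₁, x₂). If P satisfies ρ-contraction in f-divergence with respect to μ₁, then P' satisfies ρ-contraction in f-divergence with respect to μ₁'. -/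
/-!
Lift a distribution `ν'` on `Ω₁'` to `ν` on `Ω₁` by splitting each mass `ν' x₁'` over the fiber
`π₁⁻¹ x₁'` in proportion to `μ₁`. Then `D_f(ν‖μ₁) = D_f(ν'‖μ₁')`, and `ν'P'`, `μ₁'P'` are the
images of `νP`, `μ₁P` under `π₂`. Data processing for the deterministic map `π₂` (the perspective
form of Jensen's inequality on each fiber) followed by the contraction of `P` gives the claim.
-/

open Finset

/-- f-divergence between two mass functions on a finite set. -/
noncomputable def fDiv {Ω : Type*} [Fintype Ω] (f : ℝ → ℝ) (ν μ : Ω → ℝ) : ℝ :=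
  ∑ x, μ x * f (ν x / μ x)

/-- A kernel `K` satisfies `ρ`-contraction in f-divergence with respect to `μ`. -/
def FDivContraction {Ω₁ Ω₂ : Type*} [Fintype Ω₁] [Fintype Ω₂]
    (f : ℝ → ℝ) (K : Ω₁ → Ω₂ → ℝ) (μ : Ω₁ → ℝ) (ρ : ℝ) : Prop :=
  ∀ ν : Ω₁ → ℝ, (∀ x, 0 ≤ ν x) → (∑ x, ν x = 1) → (∀ x, μ x = 0 → ν x = 0) →
    fDiv f (push ν K) (push μ K) ≤ ρ * fDiv f ν μ

theorem ConvexOn.perspective_map_sum_le {ι : Type*} {s : Finset ι} {f : ℝ → ℝ}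
    (hf : ConvexOn ℝ (Set.Ici 0) f) {m n : ι → ℝ} (hm : ∀ i ∈ s, 0 ≤ m i)
    (hn : ∀ i ∈ s, 0 ≤ n i) (hnm : ∀ i ∈ s, m i = 0 → n i = 0) :
    (∑ i ∈ s, m i) * f ((∑ i ∈ s, n i) / ∑ i ∈ s, m i) ≤ ∑ i ∈ s, m i * f (n i / m i) := by
  rcases (sum_nonneg hm).eq_or_lt with hM | hM
  · rw [← hM, zero_mul]
    exact sum_nonneg fun i hi => by
      rw [(sum_eq_zero_iff_of_nonneg hm).1 hM.symm i hi, zero_mul]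
  have hJ := hf.map_centerMass_le hm hM fun i hi => Set.mem_Ici.2 (div_nonneg (hn i hi) (hm i hi))
  have hcancel : ∀ i ∈ s, m i * (n i / m i) = n i := fun i hi => by
    rcases eq_or_ne (m i) 0 with h | h
    · simp [h, hnm i hi h]
    · exact mul_div_cancel₀ _ h
  simp only [centerMass, smul_eq_mul, Function.comp_def] at hJ
  rw [sum_congr rfl hcancel] at hJ
  rw [← inv_mul_eq_div]
  calc (∑ i ∈ s, m i) * f ((∑ i ∈ s, m i)⁻¹ * ∑ i ∈ s, n i)
      ≤ (∑ i ∈ s, m i) * ((∑ i ∈ s, m i)⁻¹ * ∑ i ∈ s, m i * f (n i / m i)) := by gcongr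
    _ = ∑ i ∈ s, m i * f (n i / m i) := mul_inv_cancel_left₀ hM.ne' _

section Fibers

variable {α β γ δ : Type*} [Fintype α] [DecidableEq β]

theorem push_nonneg {ν : α → ℝ} {P : α → γ → ℝ} (hν : ∀ a, 0 ≤ ν a) (hP : ∀ a c, 0 ≤ P a c)
    (c : γ) : 0 ≤ push ν P c :=
  sum_nonneg fun a _ => mul_nonneg (hν a) (hP a c)

theorem push_eq_zero_of_eq_zero {μ ν : α → ℝ} {P : α → γ → ℝ} (hμ : ∀ a, 0 ≤ μ a)
    (hP : ∀ a c, 0 ≤ P a c) (hνμ : ∀ a, μ a = 0 → ν a = 0) {c : γ} (hc : push μ P c = 0) :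
    push ν P c = 0 := by
  have hterm := (sum_eq_zero_iff_of_nonneg fun a _ => mul_nonneg (hμ a) (hP a c)).1 hc
  refine sum_eq_zero fun a _ => ?_
  rcases mul_eq_zero.1 (hterm a (mem_univ a)) with h | h
  · rw [hνμ a h, zero_mul]
  · rw [h, mul_zero]

noncomputable def fiberSum (g : α → β) (μ : α → ℝ) (b : β) : ℝ :=
  ∑ a ∈ univ.filter (fun a => g a = b), μ a

/-- `ν` spread over each fiber `g⁻¹ b` in proportion to `μ`, i.e. `ν b · μ(a | g a = b)`. -/
noncomputable def condLift (g : α → β) (μ : α → ℝ) (ν : β → ℝ) (a : α) : ℝ :=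
  ν (g a) * (μ a / fiberSum g μ (g a))

variable {g : α → β} {μ : α → ℝ}

theorem sum_fiberSum [Fintype β] (μ : α → ℝ) : ∑ b, fiberSum g μ b = ∑ a, μ a :=
  sum_fiberwise univ g μ

theorem fiberSum_nonneg (hμ : ∀ a, 0 ≤ μ a) (b : β) : 0 ≤ fiberSum g μ b :=
  sum_nonneg fun a _ => hμ a

theorem condLift_nonneg {ν : β → ℝ} (hμ : ∀ a, 0 ≤ μ a) (hν : ∀ b, 0 ≤ ν b) (a : α) :
    0 ≤ condLift g μ ν a :=
  mul_nonneg (hν _) (div_nonneg (hμ a) (fiberSum_nonneg hμ _))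

theorem condLift_eq_zero {ν : β → ℝ} {a : α} (ha : μ a = 0) : condLift g μ ν a = 0 := by
  simp [condLift, ha]

theorem fiberSum_condLift {ν : β → ℝ} (hν : ∀ b, fiberSum g μ b = 0 → ν b = 0) :
    fiberSum g (condLift g μ ν) = ν := by
  funext b
  have hfiber : fiberSum g (condLift g μ ν) b = ν b * (fiberSum g μ b / fiberSum g μ b) := by
    calc fiberSum g (condLift g μ ν) b
        = ∑ a ∈ univ.filter (fun a => g a = b), ν b * (μ a / fiberSum g μ b) :=
          sum_congr rfl fun a ha => by rw [condLift, (mem_filter.1 ha).2]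
      _ = ν b * (fiberSum g μ b / fiberSum g μ b) := by rw [← mul_sum, ← sum_div]; rfl
  rcases eq_or_ne (fiberSum g μ b) 0 with h | h
  · rw [hfiber, h, hν b h, zero_mul]
  · rw [hfiber, div_self h, mul_one]

theorem condLift_fiberSum (hμ : ∀ a, 0 ≤ μ a) : condLift g μ (fiberSum g μ) = μ := by
  funext a
  rcases eq_or_ne (fiberSum g μ (g a)) 0 with h | h
  · rw [condLift, h, zero_mul]
    exact ((sum_eq_zero_iff_of_nonneg fun a _ => hμ a).1 h a (by simp)).symm
  · rw [condLift, mul_div_cancel₀ _ h]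

theorem fDiv_condLift [Fintype β] (f : ℝ → ℝ) (ν : β → ℝ) :
    fDiv f (condLift g μ ν) μ = fDiv f ν (fiberSum g μ) := by
  have hterm : ∀ a, μ a * f (condLift g μ ν a / μ a) =
      μ a * f (ν (g a) / fiberSum g μ (g a)) := fun a => by
    rcases eq_or_ne (μ a) 0 with h | h
    · simp [h]
    · rw [condLift, mul_div_assoc, div_div_cancel_left' h, div_eq_mul_inv]
  simp only [fDiv, hterm]
  rw [← sum_fiberwise univ g]
  refine sum_congr rfl fun b _ => ?_
  exact (sum_congr rfl fun a ha => by rw [(mem_filter.1 ha).2]).trans (sum_mul _ _ _).symm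

theorem fDiv_fiberSum_le [Fintype β] {f : ℝ → ℝ} (hf : ConvexOn ℝ (Set.Ici 0) f) {ν : α → ℝ}
    (hμ : ∀ a, 0 ≤ μ a) (hν : ∀ a, 0 ≤ ν a) (hνμ : ∀ a, μ a = 0 → ν a = 0) :
    fDiv f (fiberSum g ν) (fiberSum g μ) ≤ fDiv f ν μ := by
  rw [fDiv, fDiv, ← sum_fiberwise univ g (fun a => μ a * f (ν a / μ a))]
  exact sum_le_sum fun b _ => hf.perspective_map_sum_le (fun a _ => hμ a) (fun a _ => hν a)
    fun a _ => hνμ a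

noncomputable def projKernel [Fintype γ] [DecidableEq δ] (g₁ : α → β) (g₂ : γ → δ)
    (μ : α → ℝ) (P : α → γ → ℝ) (b : β) (d : δ) : ℝ :=
  ∑ a ∈ univ.filter (fun a => g₁ a = b), ∑ c ∈ univ.filter (fun c => g₂ c = d),
    μ a / fiberSum g₁ μ b * P a c

theorem push_projKernel [Fintype β] [Fintype γ] [DecidableEq δ] (g₁ : α → β) (g₂ : γ → δ)
    (μ : α → ℝ) (P : α → γ → ℝ) (ν : β → ℝ) :
    push ν (projKernel g₁ g₂ μ P) = fiberSum g₂ (push (condLift g₁ μ ν) P) := by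
  funext d
  calc push ν (projKernel g₁ g₂ μ P) d
      = ∑ b, ∑ a ∈ univ.filter (fun a => g₁ a = b), ∑ c ∈ univ.filter (fun c => g₂ c = d),
          condLift g₁ μ ν a * P a c := sum_congr rfl fun b _ => by
        rw [projKernel, mul_sum]
        refine sum_congr rfl fun a ha => ?_
        simp only [mul_sum, condLift, (mem_filter.1 ha).2, mul_assoc]
    _ = ∑ a, ∑ c ∈ univ.filter (fun c => g₂ c = d), condLift g₁ μ ν a * P a c :=
        sum_fiberwise univ g₁ _
    _ = fiberSum g₂ (push (condLift g₁ μ ν) P) d := sum_comm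

end Fibers

theorem fdiv_contraction_projection_general
    {Ω₁ Ω₂ Ω₁' Ω₂' : Type*} [Fintype Ω₁] [Fintype Ω₂] [Fintype Ω₁'] [Fintype Ω₂']
    [DecidableEq Ω₁'] [DecidableEq Ω₂']
    (f : ℝ → ℝ) (hf : StrictConvexOn ℝ (Set.Ici (0:ℝ)) f)
    (μ₁ : Ω₁ → ℝ) (hμ₁pos : ∀ x, 0 < μ₁ x)
    (P : Ω₁ → Ω₂ → ℝ) (hPnn : ∀ x y, 0 ≤ P x y)
    (π₁ : Ω₁ → Ω₁') (π₂ : Ω₂ → Ω₂')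
    (μ₁' : Ω₁' → ℝ) (hμ₁' : ∀ x₁', μ₁' x₁' = ∑ x₁ ∈ univ.filter (fun x₁ => π₁ x₁ = x₁'), μ₁ x₁)
    (P' : Ω₁' → Ω₂' → ℝ)
    (hP' : ∀ x₁' x₂', P' x₁' x₂' =
      ∑ x₁ ∈ univ.filter (fun x₁ => π₁ x₁ = x₁'),
        ∑ x₂ ∈ univ.filter (fun x₂ => π₂ x₂ = x₂'),
          (μ₁ x₁ / μ₁' x₁') * P x₁ x₂)
    (ρ : ℝ) (hρ : FDivContraction f P μ₁ ρ) :
    FDivContraction f P' μ₁' ρ := by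
  obtain rfl : μ₁' = fiberSum π₁ μ₁ := funext hμ₁'
  obtain rfl : P' = projKernel π₁ π₂ μ₁ P := funext fun x₁' => funext (hP' x₁')
  intro ν' hν' hν'1 hν'μ
  have hμ₁ : ∀ x, 0 ≤ μ₁ x := fun x => (hμ₁pos x).le
  set ν := condLift π₁ μ₁ ν'
  have hν : ∀ x, 0 ≤ ν x := condLift_nonneg hμ₁ hν'
  have hν1 : ∑ x, ν x = 1 := by rw [← sum_fiberSum (g := π₁), fiberSum_condLift hν'μ, hν'1]
  have hνμ : ∀ x, μ₁ x = 0 → ν x = 0 := fun _ => condLift_eq_zero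
  calc fDiv f (push ν' (projKernel π₁ π₂ μ₁ P)) (push (fiberSum π₁ μ₁) (projKernel π₁ π₂ μ₁ P))
      = fDiv f (fiberSum π₂ (push ν P)) (fiberSum π₂ (push μ₁ P)) := by
        rw [push_projKernel, push_projKernel, condLift_fiberSum hμ₁]
    _ ≤ fDiv f (push ν P) (push μ₁ P) :=
        fDiv_fiberSum_le hf.convexOn (push_nonneg hμ₁ hPnn) (push_nonneg hν hPnn)
          fun _ => push_eq_zero_of_eq_zero hμ₁ hPnn hνμ
    _ ≤ ρ * fDiv f ν μ₁ := hρ ν hν hν1 hνμ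
    _ = ρ * fDiv f ν' (fiberSum π₁ μ₁) := by rw [fDiv_condLift]

/-- Contraction under projection. If `P` satisfies `ρ`-contraction in
f-divergence with respect to `μ₁`, then the projected kernel `P'` satisfies `ρ`-contraction
in f-divergence with respect to `μ₁' = μ₁ ∘ π₁⁻¹`. -/
theorem fdiv_contraction_projection
    {Ω₁ Ω₂ Ω₁' Ω₂' : Type*} [Fintype Ω₁] [Fintype Ω₂] [Fintype Ω₁'] [Fintype Ω₂']
    [DecidableEq Ω₁'] [DecidableEq Ω₂']
    (f : ℝ → ℝ) (hf : StrictConvexOn ℝ (Set.Ici (0:ℝ)) f) (hf1 : f 1 = 0)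
    (hfnn : ∀ x : ℝ, 0 ≤ x → 0 ≤ f x)
    (μ₁ : Ω₁ → ℝ) (hμ₁pos : ∀ x, 0 < μ₁ x) (hμ₁1 : ∑ x, μ₁ x = 1)
    (P : Ω₁ → Ω₂ → ℝ) (hPnn : ∀ x y, 0 ≤ P x y) (hProw : ∀ x, ∑ y, P x y = 1)
    (π₁ : Ω₁ → Ω₁') (hπ₁ : Function.Surjective π₁) (π₂ : Ω₂ → Ω₂')
    (μ₁' : Ω₁' → ℝ) (hμ₁' : ∀ x₁', μ₁' x₁' = ∑ x₁ ∈ univ.filter (fun x₁ => π₁ x₁ = x₁'), μ₁ x₁)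
    (P' : Ω₁' → Ω₂' → ℝ)
    (hP' : ∀ x₁' x₂', P' x₁' x₂' =
      ∑ x₁ ∈ univ.filter (fun x₁ => π₁ x₁ = x₁'),
        ∑ x₂ ∈ univ.filter (fun x₂ => π₂ x₂ = x₂'),
          (μ₁ x₁ / μ₁' x₁') * P x₁ x₂)
    (ρ : ℝ) (hρ : FDivContraction f P μ₁ ρ) :
    FDivContraction f P' μ₁' ρ :=
  fdiv_contraction_projection_general f hf μ₁ hμ₁pos P hPnn π₁ π₂ μ₁' hμ₁' P' hP' ρ hρ
end

section
/- For integers 1 ≤ k ≤ n and constant C ≥ 1, the product ∏_{j=n-k+1}^{n} (1 - 1/(j(C+1))) is at most (1 - k/(n+1))^{1/(C+1)}. -/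
/-!
Bound each factor by `1 - x ≤ exp (-x)`, so the product is at most `exp (-c ∑ 1/j)` with
`c = 1/(C+1)`; comparing `1/j` with `log (j+1) - log j` and telescoping bounds the harmonic
block from below by `log ((n+1)/(n-k+1))`, which turns the exponential into the stated power.
-/

open Finset Real

lemma log_add_one_sub_log_le_inv {x : ℝ} (hx : 0 < x) : log (x + 1) - log x ≤ x⁻¹ := by
  rw [← log_div (by positivity) hx.ne']
  calc log ((x + 1) / x) ≤ (x + 1) / x - 1 := log_le_sub_one_of_pos (by positivity)
    _ = x⁻¹ := by field_simp; ring

lemma log_sub_log_le_sum_Icc_inv {a : ℕ} (ha : 0 < a) (b : ℕ) :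
    log (b + 1) - log a ≤ ∑ j ∈ Icc a b, (j : ℝ)⁻¹ := by
  rcases le_or_gt a b with hab | hba
  · calc log (b + 1) - log a = ∑ j ∈ Icc a b, (log ((j + 1 : ℕ) : ℝ) - log (j : ℕ)) := by
          rw [sum_Icc_sub hab (fun j : ℕ => log (j : ℝ))]; push_cast; rfl
      _ ≤ ∑ j ∈ Icc a b, (j : ℝ)⁻¹ := by
          gcongr with j hj
          push_cast
          exact log_add_one_sub_log_le_inv (Nat.cast_pos.2 (ha.trans_le (mem_Icc.1 hj).1))
  · have : log (b + 1) ≤ log a := log_le_log (by positivity) (by exact_mod_cast hba)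
    rw [Icc_eq_empty_of_lt hba, sum_empty]
    linarith

lemma prod_Icc_one_sub_div_le_rpow {a : ℕ} (ha : 0 < a) (b : ℕ) {c : ℝ} (hc0 : 0 ≤ c)
    (hca : c ≤ a) :
    ∏ j ∈ Icc a b, (1 - c / j) ≤ ((a : ℝ) / (b + 1)) ^ c := by
  have hge : ∀ j ∈ Icc a b, (a : ℝ) ≤ j := fun j hj => by exact_mod_cast (mem_Icc.1 hj).1
  have ha' : (0 : ℝ) < a := by exact_mod_cast ha
  calc ∏ j ∈ Icc a b, (1 - c / j)
      ≤ ∏ j ∈ Icc a b, exp (-(c / j)) := by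
        refine prod_le_prod (fun j hj => ?_) (fun j _ => one_sub_le_exp_neg _)
        rw [sub_nonneg, div_le_one (ha'.trans_le (hge j hj))]
        exact hca.trans (hge j hj)
    _ = exp (-(c * ∑ j ∈ Icc a b, (j : ℝ)⁻¹)) := by
        simp only [← exp_sum, sum_neg_distrib, mul_sum, div_eq_mul_inv]
    _ ≤ exp (-(c * (log (b + 1) - log a))) := by
        gcongr; exact log_sub_log_le_sum_Icc_inv ha b
    _ = ((a : ℝ) / (b + 1)) ^ c := by
        rw [rpow_def_of_pos (by positivity), log_div ha'.ne' (by positivity)]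
        ring_nf

theorem prod_contraction_le_rpow_general (n k : ℕ) (hkn : k ≤ n)
    (C : ℝ) (hC : 1 ≤ C) :
    ∏ j ∈ Finset.Icc (n - k + 1) n, (1 - 1 / ((j : ℝ) * (C + 1))) ≤
      (1 - (k : ℝ) / ((n : ℝ) + 1)) ^ (1 / (C + 1)) := by
  have hfactor : ∀ j : ℕ, 1 / ((j : ℝ) * (C + 1)) = 1 / (C + 1) / j := fun j => by
    rw [div_div, mul_comm]
  have hbase : 1 - (k : ℝ) / (n + 1) = ((n - k + 1 : ℕ) : ℝ) / (n + 1) := by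
    rw [Nat.cast_add, Nat.cast_sub hkn]; field_simp; ring
  simp only [hfactor, hbase]
  refine prod_Icc_one_sub_div_le_rpow (Nat.succ_pos _) n (by positivity) ?_
  calc 1 / (C + 1) ≤ 1 := (div_le_one (by linarith)).2 (by linarith)
    _ ≤ _ := by exact_mod_cast Nat.succ_pos _

/-- for integers `1 ≤ k ≤ n` and `C ≥ 1`,
`∏_{j=n-k+1}^{n} (1 - 1/(j(C+1))) ≤ (1 - k/(n+1))^{1/(C+1)}`. -/
theorem prod_contraction_le_rpow (n k : ℕ) (hk1 : 1 ≤ k) (hkn : k ≤ n)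
    (C : ℝ) (hC : 1 ≤ C) :
    ∏ j ∈ Finset.Icc (n - k + 1) n, (1 - 1 / ((j : ℝ) * (C + 1))) ≤
      (1 - (k : ℝ) / ((n : ℝ) + 1)) ^ (1 / (C + 1)) :=
  prod_contraction_le_rpow_general n k hkn C hC
end

section
/- Consider the approximate rejection sampler: draw X, Z ∼ Q independently, set R = exp(g(X)-g(Z)), accept X with probability min{R/c, 1}, where c ≥ 1, and let P̂ be the distribution of the accepted sample. Let P(x) ∝ Q(x)e^{g(x)}. Then the acceptance probability per iteration equals (1/c)·E[min{R,c}] and is at least 1/(2c), and the total variation distance satisfies TV(P̂, P) ≤ E[(R-c)·1{R≥c}] / E[R]. -/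
open Finset Real

/-- guarantees for the approximate rejection sampler. With `X, Z ∼ Q` i.i.d.,
`R = e^{g(X)-g(Z)}`, acceptance probability `min{R/c, 1}` and `c ≥ 1`:
the per-iteration acceptance probability equals `(1/c) E[min{R,c}]`, is at least `1/(2c)`,
and `TV(P̂, P) ≤ E[(R-c) 1{R ≥ c}] / E[R]` where `P̂` is the accepted-sample distribution
and `P(x) ∝ Q(x) e^{g(x)}`. -/
theorem approx_rejection_sampler_guarantees
    {Ω : Type*} [Fintype Ω]
    (Q : Ω → ℝ) (hQpos : ∀ x, 0 < Q x) (hQ1 : ∑ x, Q x = 1)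
    (g : Ω → ℝ) (c : ℝ) (hc : 1 ≤ c)
    (R : Ω → Ω → ℝ) (hR : ∀ x z, R x z = exp (g x - g z))
    (P : Ω → ℝ) (hP : ∀ x, P x = Q x * exp (g x) / ∑ y, Q y * exp (g y))
    (paccept : ℝ) (hpacc : paccept = ∑ x, ∑ z, Q x * Q z * min (R x z / c) 1)
    (Phat : Ω → ℝ)
    (hPhat : ∀ x, Phat x =
      Q x * (∑ z, Q z * min (R x z) c) / ∑ x', ∑ z, Q x' * Q z * min (R x' z) c) :
    paccept = (1 / c) * ∑ x, ∑ z, Q x * Q z * min (R x z) c ∧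
    1 / (2 * c) ≤ paccept ∧
    (1 / 2) * ∑ x, |Phat x - P x| ≤
      (∑ x, ∑ z, Q x * Q z * (if c ≤ R x z then R x z - c else 0)) /
        (∑ x, ∑ z, Q x * Q z * R x z) := by
  have hΩ : Nonempty Ω := by
    rcases isEmpty_or_nonempty Ω with h | h
    · simp at hQ1
    · exact h
  have hc0 : (0:ℝ) < c := lt_of_lt_of_le one_pos hc
  have hRpos : ∀ x z, 0 < R x z := fun x z => by rw [hR]; exact exp_pos _
  have hQnn : ∀ x, 0 ≤ Q x := fun x => (hQpos x).le
  set S := ∑ y, Q y * exp (g y) with hSdef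
  have hSpos : 0 < S :=
    Finset.sum_pos (fun y _ => mul_pos (hQpos y) (exp_pos _)) Finset.univ_nonempty
  set T := ∑ z, Q z * exp (-(g z)) with hTdef
  have hTpos : 0 < T :=
    Finset.sum_pos (fun z _ => mul_pos (hQpos z) (exp_pos _)) Finset.univ_nonempty
  have hRsplit : ∀ x z, R x z = exp (g x) * exp (-(g z)) := fun x z => by
    rw [hR, ← Real.exp_add]; ring_nf
  have hER : (∑ x, ∑ z, Q x * Q z * R x z) = S * T := by
    rw [hSdef, hTdef, Finset.sum_mul_sum]
    exact Finset.sum_congr rfl fun x _ => Finset.sum_congr rfl fun z _ => by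
      rw [hRsplit]; ring
  set A := ∑ x, ∑ z, Q x * Q z * min (R x z) c with hAdef
  set D := ∑ x, ∑ z, Q x * Q z * (if c ≤ R x z then R x z - c else 0) with hDdef
  -- Part 1
  have part1 : paccept = (1 / c) * A := by
    rw [hpacc, hAdef, Finset.mul_sum]
    refine Finset.sum_congr rfl fun x _ => ?_
    rw [Finset.mul_sum]
    refine Finset.sum_congr rfl fun z _ => ?_
    have hmin : min (R x z / c) 1 = min (R x z) c / c := by
      rw [← div_self hc0.ne', min_div_div_right hc0.le]
    rw [hmin]; field_simp
  -- Part 2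
  have hApos : 0 < A :=
    Finset.sum_pos (fun x _ => Finset.sum_pos (fun z _ =>
      mul_pos (mul_pos (hQpos x) (hQpos z)) (lt_min (hRpos x z) hc0))
      Finset.univ_nonempty) Finset.univ_nonempty
  have hone : (∑ x, ∑ z, Q x * Q z) = 1 := by
    rw [← Finset.sum_mul_sum, hQ1, one_mul]
  have hhalf : (1:ℝ)/2 ≤ A := by
    set B := ∑ x, ∑ z, Q x * Q z * (if g z ≤ g x then (1:ℝ) else 0) with hBdef
    have hswap : (∑ x, ∑ z, Q x * Q z * (if g x ≤ g z then (1:ℝ) else 0)) = B := by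
      rw [hBdef, Finset.sum_comm]
      exact Finset.sum_congr rfl fun z _ => Finset.sum_congr rfl fun x _ => by ring
    have hBA : B ≤ A := by
      refine Finset.sum_le_sum fun x _ => Finset.sum_le_sum fun z _ => ?_
      by_cases h : g z ≤ g x
      · rw [if_pos h]
        have h1 : (1:ℝ) ≤ R x z := by
          rw [hR]
          calc (1:ℝ) = exp 0 := Real.exp_zero.symm
            _ ≤ exp (g x - g z) := exp_le_exp.mpr (by linarith)
        exact mul_le_mul_of_nonneg_left (le_min h1 hc) (mul_nonneg (hQnn x) (hQnn z))
      · rw [if_neg h]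
        have : 0 ≤ Q x * Q z * min (R x z) c :=
          mul_nonneg (mul_nonneg (hQnn x) (hQnn z)) (le_min (hRpos x z).le hc0.le)
        linarith
    have h2B : 1 ≤ 2 * B := by
      have step0 : (∑ x, ∑ z, Q x * Q z) ≤ ∑ x, ∑ z, (Q x * Q z * (if g z ≤ g x then (1:ℝ) else 0)
          + Q x * Q z * (if g x ≤ g z then (1:ℝ) else 0)) := by
        refine Finset.sum_le_sum fun x _ => Finset.sum_le_sum fun z _ => ?_
        rcases le_total (g z) (g x) with h | h
        · rw [if_pos h, mul_one]
          have : 0 ≤ Q x * Q z * (if g x ≤ g z then (1:ℝ) else 0) := by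
            split_ifs with h'
            · simpa using mul_nonneg (mul_nonneg (hQnn x) (hQnn z)) zero_le_one
            · simp
          linarith
        · rw [if_pos h, mul_one]
          have : 0 ≤ Q x * Q z * (if g z ≤ g x then (1:ℝ) else 0) := by
            split_ifs with h'
            · simpa using mul_nonneg (mul_nonneg (hQnn x) (hQnn z)) zero_le_one
            · simp
          linarith
      have step : (1:ℝ) ≤ ∑ x, ∑ z, (Q x * Q z * (if g z ≤ g x then (1:ℝ) else 0)
          + Q x * Q z * (if g x ≤ g z then (1:ℝ) else 0)) := hone ▸ step0
      have hsplit : (∑ x, ∑ z, (Q x * Q z * (if g z ≤ g x then (1:ℝ) else 0)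
          + Q x * Q z * (if g x ≤ g z then (1:ℝ) else 0))) = 2 * B := by
        simp only [Finset.sum_add_distrib]
        rw [hswap]; ring
      linarith [step, hsplit ▸ step]
    linarith
  have part2 : 1 / (2 * c) ≤ paccept := by
    rw [part1]
    have h := mul_le_mul_of_nonneg_left hhalf (le_of_lt (by positivity : (0:ℝ) < 1/c))
    calc 1/(2*c) = 1/c * (1/2) := by field_simp
      _ ≤ 1/c * A := h
  -- Part 3
  have hST : 0 < S * T := mul_pos hSpos hTpos
  have hd_nonneg : ∀ x z, 0 ≤ (if c ≤ R x z then R x z - c else 0) := by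
    intro x z; split_ifs with h
    · linarith
    · exact le_refl 0
  have hfd : ∀ x, (∑ z, Q z * min (R x z) c)
      = exp (g x) * T - ∑ z, Q z * (if c ≤ R x z then R x z - c else 0) := by
    intro x
    have key : (∑ z, Q z * min (R x z) c)
        + (∑ z, Q z * (if c ≤ R x z then R x z - c else 0)) = exp (g x) * T := by
      rw [← Finset.sum_add_distrib, hTdef, Finset.mul_sum]
      refine Finset.sum_congr rfl fun z _ => ?_
      rcases le_or_gt c (R x z) with h | h
      · rw [if_pos h, min_eq_right h, hRsplit]; ring
      · rw [if_neg (not_le.mpr h), min_eq_left h.le, hRsplit]; ring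
    linarith
  have hAf : A = ∑ x, Q x * ∑ z, Q z * min (R x z) c := by
    rw [hAdef]
    exact Finset.sum_congr rfl fun x _ => by
      rw [Finset.mul_sum]
      exact Finset.sum_congr rfl fun z _ => by ring
  have hDd : D = ∑ x, Q x * ∑ z, Q z * (if c ≤ R x z then R x z - c else 0) := by
    rw [hDdef]
    exact Finset.sum_congr rfl fun x _ => by
      rw [Finset.mul_sum]
      exact Finset.sum_congr rfl fun z _ => by ring
  have hAST : A ≤ S * T := by
    rw [← hER, hAdef]
    refine Finset.sum_le_sum fun x _ => Finset.sum_le_sum fun z _ => ?_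
    exact mul_le_mul_of_nonneg_left (min_le_left _ _) (mul_nonneg (hQnn x) (hQnn z))
  have hPsum : ∑ x, P x = 1 := by
    have : ∑ x, P x = (∑ x, Q x * exp (g x)) / S := by
      rw [Finset.sum_div]
      exact Finset.sum_congr rfl fun x _ => hP x
    rw [this, ← hSdef, div_self hSpos.ne']
  have hPhatsum : ∑ x, Phat x = 1 := by
    have : ∑ x, Phat x = (∑ x, Q x * ∑ z, Q z * min (R x z) c) / A := by
      rw [Finset.sum_div]
      exact Finset.sum_congr rfl fun x _ => hPhat x
    rw [this, ← hAf, div_self hApos.ne']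
  have hkey : ∀ x, P x - Phat x
      ≤ Q x * (∑ z, Q z * (if c ≤ R x z then R x z - c else 0)) / (S * T) := by
    intro x
    have hfxnn : 0 ≤ Q x * ∑ z, Q z * min (R x z) c :=
      mul_nonneg (hQnn x) (Finset.sum_nonneg fun z _ =>
        mul_nonneg (hQnn z) (le_min (hRpos x z).le hc0.le))
    have h1 : Q x * (∑ z, Q z * min (R x z) c) / (S * T)
        ≤ Q x * (∑ z, Q z * min (R x z) c) / A :=
      div_le_div_of_nonneg_left hfxnn hApos hAST
    have h2 : P x - Phat x
        ≤ Q x * exp (g x) / S - Q x * (∑ z, Q z * min (R x z) c) / (S * T) := by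
      rw [hP x, hPhat x]
      linarith [h1]
    refine h2.trans (le_of_eq ?_)
    rw [hfd x]
    field_simp
    ring
  have habs : ∑ x, |Phat x - P x| = 2 * ∑ x, max (P x - Phat x) 0 := by
    have h0 : ∑ x, (Phat x - P x) = 0 := by
      rw [Finset.sum_sub_distrib, hPhatsum, hPsum]; ring
    have hterm : ∀ x, |Phat x - P x| = 2 * max (P x - Phat x) 0 + (Phat x - P x) := by
      intro x; rcases le_total (P x) (Phat x) with h | h
      · rw [abs_of_nonneg (by linarith), max_eq_right (by linarith)]; ring
      · rw [abs_of_nonpos (by linarith), max_eq_left (by linarith)]; ring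
    rw [Finset.sum_congr rfl fun x _ => hterm x, Finset.sum_add_distrib, h0,
      ← Finset.mul_sum]
    ring
  have hfinal : ∑ x, max (P x - Phat x) 0 ≤ D / (S * T) := by
    have hrw : D / (S*T)
        = ∑ x, Q x * (∑ z, Q z * (if c ≤ R x z then R x z - c else 0)) / (S * T) := by
      rw [hDd, Finset.sum_div]
    rw [hrw]
    refine Finset.sum_le_sum fun x _ => ?_
    refine max_le (hkey x) ?_
    have : 0 ≤ Q x * (∑ z, Q z * (if c ≤ R x z then R x z - c else 0)) :=
      mul_nonneg (hQnn x) (Finset.sum_nonneg fun z _ =>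
        mul_nonneg (hQnn z) (hd_nonneg x z))
    exact div_nonneg this hST.le
  refine ⟨part1, part2, ?_⟩
  calc (1/2) * ∑ x, |Phat x - P x| = ∑ x, max (P x - Phat x) 0 := by rw [habs]; ring
    _ ≤ D / (S * T) := hfinal
    _ = D / (∑ x, ∑ z, Q x * Q z * R x z) := by rw [hER]
end

section
/- Let μ be a distribution on a product space Ω = Ω₁'×⋯×Ωₙ' which admits a mixture decomposition μ = ∫ μ_y dπ(y) with E_{μ_y}[f] = E_μ[f] π-a.s., where each component μ_y satisfies C-approximate tensorization of entropy. Then Ent_μ[f] ≤ C · Σ_{i=1}ⁿ E_{x∼μ}[Ent_{μ(X_i=·|X_{∼i}=x_{∼i})}[f]]; i.e., μ satisfies C-approximate tensorization of entropy for this f. -/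
open Finset

/-- Entropy of a nonnegative function `f` with respect to a mass function `μ`. -/
noncomputable def ent {Ω : Type*} [Fintype Ω] (μ f : Ω → ℝ) : ℝ :=
  ∑ x, μ x * (f x * Real.log (f x)) -
    (∑ x, μ x * f x) * Real.log (∑ x, μ x * f x)

/-- Expected conditional entropy of coordinate `i`:
`E_{x∼μ}[Ent_{μ(X_i=· | X_{∼i}=x_{∼i})}[f]]`. -/
noncomputable def condEnt {n : ℕ} {Ω' : Fin n → Type*} [∀ i, Fintype (Ω' i)]
    (μ f : (∀ i, Ω' i) → ℝ) (i : Fin n) : ℝ :=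
  ∑ x, μ x *
    ent (fun a : Ω' i => μ (Function.update x i a) / ∑ b, μ (Function.update x i b))
      (fun a : Ω' i => f (Function.update x i a))

/-- `C`-approximate tensorization of entropy for a distribution on a product space. -/
def ApproxTensorization {n : ℕ} {Ω' : Fin n → Type*} [∀ i, Fintype (Ω' i)]
    (C : ℝ) (ν : (∀ i, Ω' i) → ℝ) : Prop :=
  ∀ f : (∀ i, Ω' i) → ℝ, (∀ x, 0 ≤ f x) → ent ν f ≤ C * ∑ i, condEnt ν f i

/-!
The chain rule writes `Ent_μ[f]` as `Σ_y π(y) Ent_{μ_y}[f]` plus the entropy under `π`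
of the means `E_{μ_y}[f]`, which vanishes because these means are constant. Tensorization for each
`μ_y` bounds the first term by the averaged conditional entropies of the `μ_y`. On every fibre of
a coordinate the conditional measure of `μ` is the mixture of those of the `μ_y`, and entropy is
concave in the measure, so these averages are at most the conditional entropies of `μ`.
-/

section Entropy

variable {Ω : Type*} [Fintype Ω]

lemma ent_nonneg {μ f : Ω → ℝ} (hμ : ∀ x, 0 ≤ μ x) (hμ1 : ∑ x, μ x = 1)
    (hf : ∀ x, 0 ≤ f x) : 0 ≤ ent μ f := by
  have jensen := Real.convexOn_mul_log.map_sum_le (t := univ) (w := μ) (p := f)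
    (fun x _ => hμ x) hμ1 (fun x _ => hf x)
  simp only [smul_eq_mul] at jensen
  exact sub_nonneg.2 jensen

lemma ent_eq_zero_of_eq_on_support {μ f : Ω → ℝ} {c : ℝ} (hμ1 : ∑ x, μ x = 1)
    (hf : ∀ x, μ x ≠ 0 → f x = c) : ent μ f = 0 := by
  have hmean : ∀ g : ℝ → ℝ, ∑ x, μ x * g (f x) = g c := fun g => by
    rw [← one_mul (g c), ← hμ1, sum_mul]
    refine sum_congr rfl fun x _ => ?_
    rcases eq_or_ne (μ x) 0 with hx | hx
    · simp [hx]
    · rw [hf x hx]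
  have hmean_mul_log := hmean fun t => t * Real.log t
  have hmean_id := hmean id
  beta_reduce at hmean_mul_log
  rw [ent, hmean_mul_log, show ∑ x, μ x * f x = c from hmean_id, sub_self]

lemma ent_mixture {Y : Type*} [Fintype Y] (w : Y → ℝ) (ν : Y → Ω → ℝ) (f : Ω → ℝ) :
    ent (fun x => ∑ y, w y * ν y x) f
      = ∑ y, w y * ent (ν y) f + ent w (fun y => ∑ x, ν y x * f x) := by
  have swap : ∀ g : Ω → ℝ, ∑ x, (∑ y, w y * ν y x) * g x = ∑ y, w y * ∑ x, ν y x * g x :=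
    fun g => by simp only [sum_mul, mul_sum, mul_assoc]; exact sum_comm
  simp only [ent, swap, mul_sub, sum_sub_distrib]
  ring

/-- `Ent_ν[f]` for a mass function `ν` that need not be normalized. -/
noncomputable def massEnt (ν f : Ω → ℝ) : ℝ :=
  (∑ a, ν a) * ent (fun a => ν a / ∑ b, ν b) f

lemma massEnt_const_mul (c : ℝ) (ν f : Ω → ℝ) :
    massEnt (fun a => c * ν a) f = c * massEnt ν f := by
  by_cases hc : c = 0
  · simp [massEnt, hc]
  · simp only [massEnt, ← mul_sum, mul_div_mul_left _ _ hc, mul_assoc]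

/-- Entropy is concave in the measure; for the one-homogeneous `massEnt` this is
superadditivity. -/
lemma sum_massEnt_le_massEnt_sum {Y : Type*} [Fintype Y] {ν : Y → Ω → ℝ}
    (hν : ∀ y a, 0 ≤ ν y a) {f : Ω → ℝ} (hf : ∀ a, 0 ≤ f a) :
    ∑ y, massEnt (ν y) f ≤ massEnt (fun a => ∑ y, ν y a) f := by
  set S : Y → ℝ := fun y => ∑ a, ν y a
  have hS : ∀ y, 0 ≤ S y := fun y => sum_nonneg fun a _ => hν y a
  have hmass : ∑ a, ∑ y, ν y a = ∑ y, S y := sum_comm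
  have hS_eq_zero : ∀ y, S y = 0 → ∀ a, ν y a = 0 := fun y hy a =>
    (sum_eq_zero_iff_of_nonneg fun b _ => hν y b).1 hy a (mem_univ a)
  rcases (sum_nonneg fun y _ => hS y).eq_or_lt with htot | htot
  · have hSy : ∀ y, ∑ a, ν y a = 0 :=
      fun y => (sum_eq_zero_iff_of_nonneg fun y _ => hS y).1 htot.symm y (mem_univ y)
    simp [massEnt, hSy, hmass, ← htot]
  set w : Y → ℝ := fun y => S y / ∑ y', S y'
  have hnormalize : (fun a => (∑ y, ν y a) / ∑ b, ∑ y, ν y b)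
      = fun a => ∑ y, w y * (ν y a / S y) := by
    funext a
    rw [hmass, sum_div]
    refine sum_congr rfl fun y _ => ?_
    rcases eq_or_ne (S y) 0 with hy | hy
    · simp [hS_eq_zero y hy a]
    · simp only [w]
      field_simp
  have hmeans : 0 ≤ ent w fun y => ∑ a, ν y a / S y * f a :=
    ent_nonneg (fun y => div_nonneg (hS y) htot.le) (by simp [w, ← sum_div, div_self htot.ne'])
      fun y => sum_nonneg fun a _ => mul_nonneg (div_nonneg (hν y a) (hS y)) (hf a)
  calc ∑ y, massEnt (ν y) f
      = (∑ y, S y) * ∑ y, w y * ent (fun a => ν y a / S y) f := by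
        rw [mul_sum]
        refine sum_congr rfl fun y _ => ?_
        rw [← mul_assoc, mul_div_cancel₀ _ htot.ne']
        rfl
    _ ≤ (∑ y, S y) * (∑ y, w y * ent (fun a => ν y a / S y) f
          + ent w fun y => ∑ a, ν y a / S y * f a) := by
        gcongr
        exact le_add_of_nonneg_right hmeans
    _ = massEnt (fun a => ∑ y, ν y a) f := by
        rw [massEnt, hnormalize, ent_mixture, hmass]

end Entropy

section Product

variable {n : ℕ} {Ω' : Fin n → Type*} [∀ i, Fintype (Ω' i)]

/-- `(b, x) ↦ (x i, update x i b)` is an involution, so each point arises as `update x i b`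
from exactly `card (Ω' i)` pairs. -/
lemma sum_sum_update_eq_card_mul (i : Fin n) (G : (∀ j, Ω' j) → ℝ) :
    ∑ b : Ω' i, ∑ x, G (Function.update x i b) = Fintype.card (Ω' i) * ∑ x, G x := by
  have hswap : Function.Involutive
      fun p : Ω' i × (∀ j, Ω' j) => (p.2 i, Function.update p.2 i p.1) := fun p => by
    simp
  rw [← Fintype.sum_prod_type', Fintype.sum_bijective _ hswap.bijective _ (fun p => G p.2)
    fun p => rfl, Fintype.sum_prod_type]
  simp

lemma card_mul_condEnt (ν f : (∀ j, Ω' j) → ℝ) (i : Fin n) :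
    Fintype.card (Ω' i) * condEnt ν f i
      = ∑ x, massEnt (fun a => ν (Function.update x i a)) fun a => f (Function.update x i a) := by
  set g : (∀ j, Ω' j) → ℝ := fun x =>
    ent (fun a => ν (Function.update x i a) / ∑ b, ν (Function.update x i b))
      fun a => f (Function.update x i a)
  have hg : ∀ x b, g (Function.update x i b) = g x := by simp [g]
  calc Fintype.card (Ω' i) * condEnt ν f i = Fintype.card (Ω' i) * ∑ x, ν x * g x := rfl
    _ = ∑ b, ∑ x, ν (Function.update x i b) * g (Function.update x i b) :=
        (sum_sum_update_eq_card_mul i _).symm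
    _ = _ := by
        rw [sum_comm]
        refine sum_congr rfl fun x _ => ?_
        simp only [hg, ← sum_mul]
        rfl

lemma sum_mul_condEnt_le_condEnt_mixture {Y : Type*} [Fintype Y] {π : Y → ℝ}
    (hπ : ∀ y, 0 ≤ π y) {ν : Y → (∀ j, Ω' j) → ℝ} (hν : ∀ y x, 0 ≤ ν y x)
    {f : (∀ j, Ω' j) → ℝ} (hf : ∀ x, 0 ≤ f x) (i : Fin n) :
    ∑ y, π y * condEnt (ν y) f i ≤ condEnt (fun x => ∑ y, π y * ν y x) f i := by
  rcases isEmpty_or_nonempty (Ω' i) with hempty | hnonempty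
  · have : IsEmpty (∀ j, Ω' j) := ⟨fun x => hempty.false (x i)⟩
    simp [condEnt]
  have hcard : (0 : ℝ) < Fintype.card (Ω' i) := by exact_mod_cast Fintype.card_pos
  refine le_of_mul_le_mul_left ?_ hcard
  simp only [mul_sum, mul_left_comm _ (π _), card_mul_condEnt, ← massEnt_const_mul]
  rw [sum_comm]
  exact sum_le_sum fun x _ =>
    sum_massEnt_le_massEnt_sum (fun y a => mul_nonneg (hπ y) (hν y _)) fun a => hf _

end Product

theorem approx_tensorization_of_mixture_general
    {n : ℕ} {Ω' : Fin n → Type*} [∀ i, Fintype (Ω' i)]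
    {Y : Type*} [Fintype Y]
    (π : Y → ℝ) (hπnn : ∀ y, 0 ≤ π y) (hπ1 : ∑ y, π y = 1)
    (μy : Y → (∀ i, Ω' i) → ℝ) (hμynn : ∀ y x, 0 ≤ μy y x)
    (μ : (∀ i, Ω' i) → ℝ) (hμ : ∀ x, μ x = ∑ y, π y * μy y x)
    (C : ℝ) (hC : 1 ≤ C)
    (hate : ∀ y, π y ≠ 0 → ApproxTensorization C (μy y))
    (f : (∀ i, Ω' i) → ℝ) (hf : ∀ x, 0 ≤ f x)
    (hconst : ∀ y, π y ≠ 0 → ∑ x, μy y x * f x = ∑ x, μ x * f x) :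
    ent μ f ≤ C * ∑ i, condEnt μ f i := by
  obtain rfl : μ = fun x => ∑ y, π y * μy y x := funext hμ
  have hC0 : 0 ≤ C := zero_le_one.trans hC
  calc ent _ f = ∑ y, π y * ent (μy y) f := by
        rw [ent_mixture, ent_eq_zero_of_eq_on_support hπ1 hconst, add_zero]
    _ ≤ ∑ y, π y * (C * ∑ i, condEnt (μy y) f i) := sum_le_sum fun y _ => by
        rcases eq_or_ne (π y) 0 with hy | hy
        · simp [hy]
        · exact mul_le_mul_of_nonneg_left (hate y hy f hf) (hπnn y)
    _ = C * ∑ i, ∑ y, π y * condEnt (μy y) f i := by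
        simp only [mul_sum, mul_left_comm (π _) C]
        exact sum_comm
    _ ≤ C * ∑ i, condEnt _ f i := by
        gcongr with i
        exact sum_mul_condEnt_le_condEnt_mixture hπnn hμynn hf i

/-- if `μ = Σ_y π(y) μ_y` is a mixture with `E_{μ_y}[f] = E_μ[f]` on the
support of `π`, and each component `μ_y` satisfies `C`-approximate tensorization of entropy,
then `Ent_μ[f] ≤ C Σ_i E_{x∼μ}[Ent_{μ(X_i=·|X_{∼i}=x_{∼i})}[f]]`. -/
theorem approx_tensorization_of_mixture
    {n : ℕ} {Ω' : Fin n → Type*} [∀ i, Fintype (Ω' i)]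
    {Y : Type*} [Fintype Y]
    (π : Y → ℝ) (hπnn : ∀ y, 0 ≤ π y) (hπ1 : ∑ y, π y = 1)
    (μy : Y → (∀ i, Ω' i) → ℝ) (hμynn : ∀ y x, 0 ≤ μy y x) (hμy1 : ∀ y, ∑ x, μy y x = 1)
    (μ : (∀ i, Ω' i) → ℝ) (hμ : ∀ x, μ x = ∑ y, π y * μy y x)
    (C : ℝ) (hC : 1 ≤ C)
    (hate : ∀ y, π y ≠ 0 → ApproxTensorization C (μy y))
    (f : (∀ i, Ω' i) → ℝ) (hf : ∀ x, 0 ≤ f x)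
    (hconst : ∀ y, π y ≠ 0 → ∑ x, μy y x * f x = ∑ x, μ x * f x) :
    ent μ f ≤ C * ∑ i, condEnt μ f i :=
  approx_tensorization_of_mixture_general π hπnn hπ1 μy hμynn μ hμ C hC hate f hf hconst
end
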